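/- (Lemma 1, part 3.) Under the MIS/RMIS tableau setup, assume c^I_1 = 0 and that the first row of A^O is identically zero. Then (b^f)^⊺ A^{f,s} = (b^O)^⊺ A^O as row vectors in ℝ^{s^O}. -/
import Mathlib


open Matrix BigOperators Finset

/-- The increments `d_j = c^O_{j+1} - c^O_j` (with `d_{s^O} = 1 - c^O_{s^O}`). -/
noncomputable def misD (sO : ℕ) (cO : Fin sO → ℝ) (j : Fin sO) : ℝ :=
  if h : j.val + 1 < sO then cO ⟨j.val + 1, h⟩ - cO j else 1 - cO j

/-- The fast-fast GARK coefficient matrix `A^{f,f}` of the MIS/RMIS tableau. -/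
noncomputable def misAff (sI sO : ℕ) (AI : Matrix (Fin sI) (Fin sI) ℝ)
    (bI : Fin sI → ℝ) (cO : Fin sO → ℝ) :
    Matrix (Fin sO × Fin sI) (Fin sO × Fin sI) ℝ :=
  fun ip jq =>
    if jq.1 < ip.1 then misD sO cO jq.1 * bI jq.2
    else if jq.1 = ip.1 then misD sO cO ip.1 * AI ip.2 jq.2
    else 0

/-- The slow-fast GARK coefficient matrix `A^{s,f}` of the MIS/RMIS tableau. -/
noncomputable def misAsf (sI sO : ℕ) (bI : Fin sI → ℝ) (cO : Fin sO → ℝ) :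
    Matrix (Fin sO) (Fin sO × Fin sI) ℝ :=
  fun i jq => if jq.1 < i then misD sO cO jq.1 * bI jq.2 else 0

/-- The fast-slow GARK coefficient matrix `A^{f,s}` of the MIS/RMIS tableau. -/
noncomputable def misAfs (sI sO : ℕ) (cI : Fin sI → ℝ)
    (AO : Matrix (Fin sO) (Fin sO) ℝ) (bO : Fin sO → ℝ) :
    Matrix (Fin sO × Fin sI) (Fin sO) ℝ :=
  fun ip j =>
    if ip.1.val = 0 then
      (if h : 1 < sO then cI ip.2 * AO ⟨1, h⟩ j else 0)
    else if h : ip.1.val + 1 < sO then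
      AO ip.1 j + cI ip.2 * (AO ⟨ip.1.val + 1, h⟩ j - AO ip.1 j)
    else
      AO ip.1 j + cI ip.2 * (bO j - AO ip.1 j)

/-- The fast abscissae `c^f` of the MIS/RMIS tableau. -/
noncomputable def misCf (sI sO : ℕ) (cI : Fin sI → ℝ) (cO : Fin sO → ℝ) :
    Fin sO × Fin sI → ℝ :=
  fun ip => cO ip.1 + misD sO cO ip.1 * cI ip.2

/-- The RMIS fast weights `b^f` (i-th block is `b^O_i e_1`). -/
noncomputable def misBf (sI sO : ℕ) (bO : Fin sO → ℝ) : Fin sO × Fin sI → ℝ :=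
  fun ip => if ip.2.val = 0 then bO ip.1 else 0

/-- The vector `v^O` appearing in the fourth-order RMIS condition. -/
noncomputable def misV (sO : ℕ) (bO cO : Fin sO → ℝ) (i : Fin sO) : ℝ :=
  if i.val = 0 then 0
  else if h : i.val + 1 < sO then
    bO i * (cO i - cO ⟨i.val - 1, by have := i.isLt; omega⟩) +
      (cO ⟨i.val + 1, h⟩ - cO ⟨i.val - 1, by have := i.isLt; omega⟩) *
        ∑ j ∈ Finset.univ.filter (fun j => i < j), bO j
  else bO i * (cO i - cO ⟨i.val - 1, by have := i.isLt; omega⟩)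

/-- Lemma 1, part 3: If `c^I_1 = 0` and the first row of `A^O` is zero,
then `(b^f)ᵀ A^{f,s} = (b^O)ᵀ A^O`. -/
theorem bf_Afs_eq_bO_AO (sI sO : ℕ) (hsI : 1 ≤ sI) (hsO : 2 ≤ sO)
    (AI : Matrix (Fin sI) (Fin sI) ℝ) (bI cI : Fin sI → ℝ)
    (AO : Matrix (Fin sO) (Fin sO) ℝ) (bO cO : Fin sO → ℝ)
    (hcO1 : cO ⟨0, by omega⟩ = 0)
    (hcI1 : cI ⟨0, by omega⟩ = 0)
    (hAO1 : ∀ j, AO ⟨0, by omega⟩ j = 0) :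
    misBf sI sO bO ᵥ* misAfs sI sO cI AO bO = bO ᵥ* AO := by
  funext j
  simp only [Matrix.vecMul, dotProduct, Fintype.sum_prod_type]
  refine Finset.sum_congr rfl fun i _ => ?_
  rw [Finset.sum_eq_single (⟨0, by omega⟩ : Fin sI)]
  · simp only [misBf, misAfs]
    by_cases h0 : i.val = 0
    · have hi : i = ⟨0, by omega⟩ := Fin.ext h0
      have hA : AO i j = 0 := by rw [hi]; exact hAO1 j
      simp only [h0, if_pos trivial, if_pos rfl, hcI1, zero_mul, hA, mul_zero]
      split <;> simp
    · simp [h0, hcI1]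
  · intro p _ hp
    simp [misBf, Fin.ext_iff, fun h => hp (Fin.ext h)]
    intro h; exact absurd (Fin.ext h) hp
  · simp
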